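/- arXiv:1204.5456 — 2 statements merged into one kernel-verified Lean document; each statement's English description precedes it below -/
import Mathlib

section
/- Let S and T be two distinct nonempty subsets of Fin m. Then the probability that ∑_{(s,t) ∈ S×T, s ≠ t} c_{{s,t}} = 0 in (ZMod 2)^r equals 2^{−r}. (In group-theoretic terms: in the random group with commutator relations [x_i,x_j] = c_{{i,j}}, the probability that ∏_{s∈S} x_s commutes with ∏_{t∈T} x_t is 2^{−r}.) -/
open MeasureTheory

/-- Unordered pairs of distinct elements of `Fin m`. -/
abbrev EdgeIdx (m : ℕ) := {e : Sym2 (Fin m) // ¬ e.IsDiag}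

instance (r : ℕ) : MeasurableSpace (Fin r → ZMod 2) := ⊤

/-- The product of uniform measures: a family of independent random variables `c_e`,
indexed by the unordered pairs of distinct elements of `Fin m`, each uniformly
distributed on `(ZMod 2)^r`. -/
noncomputable def groupMeasure (m r : ℕ) : Measure (EdgeIdx m → (Fin r → ZMod 2)) :=
  Measure.pi fun _ => (PMF.uniformOfFintype (Fin r → ZMod 2)).toMeasure

/-- `B_c(u, v) = ∑_{i ≠ j} u_i v_j c_{{i,j}} ∈ (ZMod 2)^r`. -/
def B {m r : ℕ} (c : EdgeIdx m → (Fin r → ZMod 2)) (u v : Fin m → ZMod 2) :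
    Fin r → ZMod 2 :=
  ∑ i : Fin m, ∑ j : Fin m,
    if h : i ≠ j then (u i * v j) • c ⟨s(i, j), fun hd => h (Sym2.mk_isDiag_iff.mp hd)⟩
    else 0

section Aux

variable {m r : ℕ}

instance : MeasurableSingletonClass (Fin r → ZMod 2) :=
  ⟨fun _ => MeasurableSpace.measurableSet_top⟩

instance : MeasurableSingletonClass (EdgeIdx m → Fin r → ZMod 2) := by
  constructor
  intro c
  have h1 : ({c} : Set (EdgeIdx m → Fin r → ZMod 2)) = Set.univ.pi fun e => {c e} := by
    ext d; simp [Set.mem_pi, funext_iff]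
  rw [h1]
  exact MeasurableSet.univ_pi fun e => MeasurableSpace.measurableSet_top

/-- The sum `∑_{(s,t) ∈ S×T, s ≠ t} c_{{s,t}}` as an additive homomorphism in `c`. -/
def sumHom (m r : ℕ) (S T : Finset (Fin m)) :
    (EdgeIdx m → (Fin r → ZMod 2)) →+ (Fin r → ZMod 2) where
  toFun c := ∑ i ∈ S, ∑ j ∈ T,
    if h : i ≠ j then c ⟨s(i, j), fun hd => h (Sym2.mk_isDiag_iff.mp hd)⟩ else 0
  map_zero' := by simp
  map_add' a b := by
    rw [← Finset.sum_add_distrib]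
    refine Finset.sum_congr rfl fun i _ => ?_
    rw [← Finset.sum_add_distrib]
    refine Finset.sum_congr rfl fun j _ => ?_
    split <;> simp

lemma sumHom_apply (S T : Finset (Fin m)) (c : EdgeIdx m → Fin r → ZMod 2) :
    sumHom m r S T c = ∑ i ∈ S, ∑ j ∈ T,
      (if h : i ≠ j then c ⟨s(i, j), fun hd => h (Sym2.mk_isDiag_iff.mp hd)⟩ else 0) := rfl

lemma sumHom_surjective (S T : Finset (Fin m)) (hS : S.Nonempty) (hT : T.Nonempty)
    (hST : S ≠ T) : Function.Surjective (sumHom m r S T) := by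
  classical
  obtain ⟨a, b, ha, hb, hab, hkey⟩ :
      ∃ a b, a ∈ S ∧ b ∈ T ∧ a ≠ b ∧ (a ∉ T ∨ b ∉ S) := by
    have h : (∃ x ∈ S, x ∉ T) ∨ (∃ x ∈ T, x ∉ S) := by
      by_contra h
      push_neg at h
      exact hST (Finset.Subset.antisymm h.1 h.2)
    rcases h with ⟨x, hxS, hxT⟩ | ⟨x, hxT, hxS⟩
    · obtain ⟨b, hb⟩ := hT
      exact ⟨x, b, hxS, hb, fun hh => hxT (hh ▸ hb), Or.inl hxT⟩
    · obtain ⟨a, ha⟩ := hS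
      exact ⟨a, x, ha, hxT, fun hh => hxS (hh ▸ ha), Or.inr hxS⟩
  intro v
  set e0 : EdgeIdx m := ⟨s(a, b), fun hd => hab (Sym2.mk_isDiag_iff.mp hd)⟩ with he0
  set cc : EdgeIdx m → Fin r → ZMod 2 := Pi.single e0 v with hcc
  refine ⟨cc, ?_⟩
  rw [sumHom_apply]
  have h3 : ∀ i ∈ S, i ≠ a → (∑ j ∈ T,
      if h : i ≠ j then cc ⟨s(i, j), fun hd => h (Sym2.mk_isDiag_iff.mp hd)⟩
      else 0) = (0 : Fin r → ZMod 2) := by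
    intro i hi hia
    refine Finset.sum_eq_zero fun j hj => ?_
    rcases eq_or_ne i j with h | h
    · simp [h]
    · rw [dif_pos h]
      rw [hcc]
      refine Pi.single_eq_of_ne (fun hcon => ?_) _
      have hval : s(i, j) = s(a, b) := congrArg Subtype.val hcon
      rcases Sym2.eq_iff.mp hval with ⟨h1', h2'⟩ | ⟨h1', h2'⟩
      · exact hia h1'
      · rcases hkey with h' | h'
        · exact h' (h2' ▸ hj)
        · exact h' (h1' ▸ hi)
  have h1 : ∀ j ∈ T, j ≠ b →
      (if h : a ≠ j then cc ⟨s(a, j), fun hd => h (Sym2.mk_isDiag_iff.mp hd)⟩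
       else 0) = (0 : Fin r → ZMod 2) := by
    intro j hj hjb
    rcases eq_or_ne a j with h | h
    · simp [h]
    · rw [dif_pos h]
      rw [hcc]
      refine Pi.single_eq_of_ne (fun hcon => ?_) _
      have hval : s(a, j) = s(a, b) := congrArg Subtype.val hcon
      rcases Sym2.eq_iff.mp hval with ⟨h1', h2'⟩ | ⟨h1', h2'⟩
      · exact hjb h2'
      · exact hab h1'
  calc (∑ i ∈ S, ∑ j ∈ T,
      if h : i ≠ j then cc ⟨s(i, j), fun hd => h (Sym2.mk_isDiag_iff.mp hd)⟩
      else 0)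
      = ∑ j ∈ T, if h : a ≠ j then
          cc ⟨s(a, j), fun hd => h (Sym2.mk_isDiag_iff.mp hd)⟩ else 0 :=
        Finset.sum_eq_single_of_mem a ha h3
    _ = if h : a ≠ b then
          cc ⟨s(a, b), fun hd => h (Sym2.mk_isDiag_iff.mp hd)⟩ else 0 :=
        Finset.sum_eq_single_of_mem b hb h1
    _ = v := by rw [dif_pos hab, hcc]; exact Pi.single_eq_same _ _

lemma groupMeasure_singleton (c : EdgeIdx m → Fin r → ZMod 2) :
    groupMeasure m r {c} = (((2 : ENNReal) ^ r)⁻¹) ^ Fintype.card (EdgeIdx m) := by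
  have h1 : ({c} : Set (EdgeIdx m → Fin r → ZMod 2)) = Set.univ.pi fun e => {c e} := by
    ext d; simp [Set.mem_pi, funext_iff]
  rw [groupMeasure, h1, Measure.pi_pi]
  have h2 : ∀ e : EdgeIdx m,
      (PMF.uniformOfFintype (Fin r → ZMod 2)).toMeasure {c e} = ((2 : ENNReal) ^ r)⁻¹ := by
    intro e
    rw [PMF.toMeasure_apply_singleton _ _ (measurableSet_singleton _),
      PMF.uniformOfFintype_apply]
    congr 1
    rw [Fintype.card_fun]
    push_cast
    simp
  simp_rw [h2]
  rw [Finset.prod_const, Finset.card_univ]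

end Aux

/-- For any two distinct nonempty subsets `S`, `T` of `Fin m`, the probability that
`∑_{(s,t) ∈ S×T, s ≠ t} c_{{s,t}} = 0` in `(ZMod 2)^r` equals `2^(−r)`, i.e. in the random
group the probability that `∏_{s∈S} x_s` and `∏_{t∈T} x_t` commute is `2^(−r)`. -/
theorem prob_products_commute (m r : ℕ) (hm : 0 < m) (hr : 0 < r)
    (S T : Finset (Fin m)) (hS : S.Nonempty) (hT : T.Nonempty) (hST : S ≠ T) :
    groupMeasure m r {c | ∑ i ∈ S, ∑ j ∈ T,
        (if h : i ≠ j then c ⟨s(i, j), fun hd => h (Sym2.mk_isDiag_iff.mp hd)⟩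
         else 0) = 0}
      = ((2 : ENNReal) ^ r)⁻¹ := by
  classical
  set f := sumHom m r S T with hf
  set A : Set (EdgeIdx m → Fin r → ZMod 2) := {c | f c = 0} with hA
  have hAeq : {c : EdgeIdx m → Fin r → ZMod 2 | ∑ i ∈ S, ∑ j ∈ T,
      (if h : i ≠ j then c ⟨s(i, j), fun hd => h (Sym2.mk_isDiag_iff.mp hd)⟩
       else 0) = 0} = A := rfl
  rw [hAeq]
  set N := Fintype.card (EdgeIdx m) with hN
  set k := Nat.card f.ker with hk
  -- cardinality identity from the first isomorphism theorem
  have hsurj := sumHom_surjective (r := r) S T hS hT hST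
  have hcard : (2 ^ r) ^ N = 2 ^ r * k := by
    have h1 : Nat.card (EdgeIdx m → Fin r → ZMod 2)
        = Nat.card ((EdgeIdx m → Fin r → ZMod 2) ⧸ f.ker) * Nat.card f.ker :=
      AddSubgroup.card_eq_card_quotient_mul_card_addSubgroup f.ker
    have h2 : Nat.card ((EdgeIdx m → Fin r → ZMod 2) ⧸ f.ker)
        = Nat.card (Fin r → ZMod 2) :=
      Nat.card_congr (QuotientAddGroup.quotientKerEquivOfSurjective f hsurj).toEquiv
    have h3' : Fintype.card (Fin r → ZMod 2) = 2 ^ r := by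
      rw [Fintype.card_fun]; simp
    have h3 : Nat.card (Fin r → ZMod 2) = 2 ^ r := by
      rw [Nat.card_eq_fintype_card, h3']
    have h4 : Nat.card (EdgeIdx m → Fin r → ZMod 2) = (2 ^ r) ^ N := by
      rw [Nat.card_eq_fintype_card, Fintype.card_fun, h3']
    rw [← h4, h1, h2, h3]
  -- the number of elements of A is k
  have hAfin : A.Finite := Set.toFinite A
  have hAcard : hAfin.toFinset.card = k := by
    rw [← Set.ncard_eq_toFinset_card A hAfin, ← Nat.card_coe_set_eq, hk]
    refine Nat.card_congr (Equiv.subtypeEquivRight fun c => ?_)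
    simp [hA, AddMonoidHom.mem_ker]
  -- compute the measure
  have hmeas : groupMeasure m r A = (k : ENNReal) * (((2 : ENNReal) ^ r)⁻¹) ^ N := by
    have hU : A = ⋃ c ∈ hAfin.toFinset, ({c} : Set (EdgeIdx m → Fin r → ZMod 2)) := by
      ext d
      simp only [Set.mem_iUnion, Set.mem_singleton_iff, exists_prop]
      constructor
      · intro hd; exact ⟨d, hAfin.mem_toFinset.mpr hd, rfl⟩
      · rintro ⟨c, hc, rfl⟩; exact hAfin.mem_toFinset.mp hc
    rw [hU, measure_biUnion_finset ?_ (fun b _ => measurableSet_singleton b)]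
    · simp_rw [groupMeasure_singleton]
      rw [Finset.sum_const, hAcard, nsmul_eq_mul]
    · intro x _ y _ hxy
      exact Set.disjoint_singleton.mpr hxy
  rw [hmeas]
  -- final arithmetic in ENNReal
  have h2r : (2 : ENNReal) ^ r ≠ 0 := by positivity
  have h2rtop : (2 : ENNReal) ^ r ≠ ⊤ := by
    exact ENNReal.pow_ne_top (by norm_num)
  have hk0 : (k : ENNReal) ≠ 0 := by
    have : 0 < k := Nat.card_pos
    exact_mod_cast this.ne'
  have hktop : (k : ENNReal) ≠ ⊤ := ENNReal.natCast_ne_top k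
  have hcast : ((2 : ENNReal) ^ r) ^ N = (2 : ENNReal) ^ r * k := by
    have := congrArg (fun n : ℕ => (n : ENNReal)) hcard
    push_cast at this
    exact this
  rw [← ENNReal.inv_pow, hcast, mul_comm ((2 : ENNReal) ^ r) (k : ENNReal),
    ENNReal.mul_inv (Or.inl hk0) (Or.inl hktop), ← mul_assoc,
    ENNReal.mul_inv_cancel hk0 hktop, one_mul]
end

section
/- Let m ≥ 2 and r ≥ 1. The probability that there exists a nonzero vector u ∈ (ZMod 2)^m such that B_c(u, e_j) = ∑_{i ≠ j} u_i c_{{i,j}} = 0 for every j ∈ Fin m (where e_j is the j-th standard basis vector) is at most (2^m − 1) · 2^{−(m−1)r}. (In group-theoretic terms: with this probability bound failing only rarely, no nontrivial product ∏_{s∈S} x_s is central in the random group, so the center is spanned by z_1,…,z_r, w_1,…,w_m alone.) -/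
open MeasureTheory

/-!
Union bound over the `2^m - 1` nonzero vectors `u`. Fix one and a coordinate `i` with `u i ≠ 0`.
The coefficient `c_{i,j}` enters the equation `B_c(u, e_j) = 0` with the invertible factor `u i`,
so on this event the `m - 1` values `c_{i,j}` are determined by the values of `c` on the edges
avoiding `i`. With `N` edges, the event thus has at most `2^{r(N - (m - 1))}` of the `2^{rN}`
equally likely points.
-/

open scoped ENNReal

section UniformPi

variable {ι κ α : Type*} [Fintype ι] [Fintype κ] [Fintype α] [Nonempty α]
  [MeasurableSpace α] [MeasurableSingletonClass α]

lemma pi_uniformOfFintype_eq_smul_count :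
    Measure.pi (fun _ : ι => (PMF.uniformOfFintype α).toMeasure) =
      ((Fintype.card α : ℝ≥0∞)⁻¹ ^ Fintype.card ι) • Measure.count := by
  refine Measure.ext_iff_singleton.mpr fun x => ?_
  simp [PMF.toMeasure_apply_singleton _ _ (measurableSet_singleton _)]

lemma pi_uniformOfFintype_le_of_injOn {s : Set (ι → α)} (f : (ι → α) → κ → α)
    (hf : s.InjOn f) {k : ℕ} (hk : Fintype.card ι = Fintype.card κ + k) :
    Measure.pi (fun _ : ι => (PMF.uniformOfFintype α).toMeasure) s ≤
      (Fintype.card α : ℝ≥0∞)⁻¹ ^ k := by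
  classical
  have hcard : s.toFinite.toFinset.card ≤ Fintype.card α ^ Fintype.card κ := by
    simpa using Finset.card_le_card_of_injOn (s := s.toFinite.toFinset) (t := Finset.univ) f
      (fun _ _ => Finset.mem_univ _) (by rwa [Set.Finite.coe_toFinset])
  have hα : (Fintype.card α : ℝ≥0∞) ≠ 0 := by simp
  rw [pi_uniformOfFintype_eq_smul_count, Measure.smul_apply, smul_eq_mul,
    Measure.count_apply_finite _ s.toFinite, hk, pow_add]
  calc _ ≤ (Fintype.card α : ℝ≥0∞)⁻¹ ^ Fintype.card κ * (Fintype.card α : ℝ≥0∞)⁻¹ ^ k *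
        (Fintype.card α : ℝ≥0∞) ^ Fintype.card κ := by gcongr; exact_mod_cast hcard
    _ = _ := by
      rw [mul_right_comm, ← mul_pow, ENNReal.inv_mul_cancel hα (by simp), one_pow, one_mul]

end UniformPi

namespace EdgeIdx

variable {m : ℕ}

def mk {i j : Fin m} (h : i ≠ j) : EdgeIdx m :=
  ⟨s(i, j), fun hd => h (Sym2.mk_isDiag_iff.mp hd)⟩

lemma exists_eq_mk_of_mem {i : Fin m} {e : EdgeIdx m} (he : i ∈ e.1) :
    ∃ j, ∃ h : i ≠ j, e = mk h := by
  refine ⟨Sym2.Mem.other he, fun h => e.2 ?_, Subtype.ext (Sym2.other_spec he).symm⟩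
  rw [← Sym2.other_spec he, ← h]
  exact Sym2.mk_isDiag_iff.mpr rfl

lemma card_mem (i : Fin m) : Fintype.card {e : EdgeIdx m // i ∈ e.1} = m - 1 := by
  have hbij : Function.Bijective
      fun j : {j : Fin m // i ≠ j} =>
        (⟨mk j.2, Sym2.mem_mk_left _ _⟩ : {e : EdgeIdx m // i ∈ e.1}) := by
    refine ⟨fun j j' hjj' => Subtype.ext ?_, fun e => ?_⟩
    · exact Sym2.congr_right.mp (congrArg (fun e => e.1.1) hjj')
    · obtain ⟨j, hij, he⟩ := exists_eq_mk_of_mem e.2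
      exact ⟨⟨j, hij⟩, Subtype.ext he.symm⟩
  rw [← Fintype.card_of_bijective hbij]
  simp only [ne_eq, Fintype.card_subtype_compl, Fintype.card_fin, Fintype.card_unique]

lemma card_eq_card_notMem_add (i : Fin m) :
    Fintype.card (EdgeIdx m) = Fintype.card {e : EdgeIdx m // i ∉ e.1} + (m - 1) := by
  rw [← card_mem i, Fintype.card_subtype_compl (fun e : EdgeIdx m => i ∈ e.1)]
  have := Fintype.card_subtype_le (fun e : EdgeIdx m => i ∈ e.1)
  omega

end EdgeIdx

section Bilinear

variable {m r : ℕ}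

lemma B_single (c : EdgeIdx m → Fin r → ZMod 2) (u : Fin m → ZMod 2) (j : Fin m) :
    B c u (Pi.single j 1) = ∑ i, if h : i ≠ j then u i • c (EdgeIdx.mk h) else 0 := by
  refine Finset.sum_congr rfl fun i _ => ?_
  rw [Finset.sum_eq_single j]
  · split_ifs <;> simp [EdgeIdx.mk]
  · intro k _ hkj
    split_ifs <;> simp [Pi.single_eq_of_ne hkj]
  · simp

lemma B_sub (c c' : EdgeIdx m → Fin r → ZMod 2) (u v : Fin m → ZMod 2) :
    B (c - c') u v = B c u v - B c' u v := by
  simp only [B, ← Finset.sum_sub_distrib]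
  refine Finset.sum_congr rfl fun i _ => Finset.sum_congr rfl fun j _ => ?_
  split_ifs <;> simp [smul_sub]

lemma B_single_of_eq_zero_of_notMem {d : EdgeIdx m → Fin r → ZMod 2} {i : Fin m}
    (hd : ∀ e : EdgeIdx m, i ∉ e.1 → d e = 0) (u : Fin m → ZMod 2) {j : Fin m} (hij : i ≠ j) :
    B d u (Pi.single j 1) = u i • d (EdgeIdx.mk hij) := by
  rw [B_single, Finset.sum_eq_single i (fun k _ hki => ?_) (by simp), dif_pos hij]
  split_ifs with hkj
  · rw [hd _ (by simp [EdgeIdx.mk, Sym2.mem_iff, hki.symm, hij]), smul_zero]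
  · rfl

lemma injOn_restrict_notMem {u : Fin m → ZMod 2} {i : Fin m} (hu : u i ≠ 0) :
    Set.InjOn (fun c (e : {e : EdgeIdx m // i ∉ e.1}) => c e.1)
      {c : EdgeIdx m → Fin r → ZMod 2 | ∀ j, B c u (Pi.single j 1) = 0} := by
  intro c hc c' hc' hcc'
  have hd : ∀ e : EdgeIdx m, i ∉ e.1 → (c - c') e = 0 :=
    fun e he => sub_eq_zero.mpr (congrFun hcc' ⟨e, he⟩)
  refine sub_eq_zero.mp (funext fun e => ?_)
  by_cases he : i ∈ e.1
  · obtain ⟨j, hij, rfl⟩ := EdgeIdx.exists_eq_mk_of_mem he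
    have hB := B_single_of_eq_zero_of_notMem hd u hij
    rw [B_sub, hc j, hc' j, sub_zero, eq_comm, smul_eq_zero] at hB
    exact hB.resolve_left hu
  · exact hd e he

lemma groupMeasure_forall_B_single_eq_zero_le {u : Fin m → ZMod 2} (hu : u ≠ 0) :
    groupMeasure m r {c | ∀ j, B c u (Pi.single j 1) = 0} ≤ ((2 : ℝ≥0∞) ^ ((m - 1) * r))⁻¹ := by
  obtain ⟨i, hi⟩ := Function.ne_iff.mp hu
  have : MeasurableSingletonClass (Fin r → ZMod 2) := ⟨fun _ => trivial⟩
  calc _ ≤ (Fintype.card (Fin r → ZMod 2) : ℝ≥0∞)⁻¹ ^ (m - 1) :=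
        pi_uniformOfFintype_le_of_injOn _ (injOn_restrict_notMem hi)
          (EdgeIdx.card_eq_card_notMem_add i)
    _ = _ := by simp [ENNReal.inv_pow, pow_mul, mul_comm]

end Bilinear

theorem prob_extra_central_element_general (m r : ℕ) :
    groupMeasure m r
        {c | ∃ u : Fin m → ZMod 2, u ≠ 0 ∧
          ∀ j : Fin m, B c u (Pi.single j 1) = 0}
      ≤ ((2 : ENNReal) ^ m - 1) * ((2 : ENNReal) ^ ((m - 1) * r))⁻¹ := by
  set U : Finset (Fin m → ZMod 2) := Finset.univ.erase 0
  have hU : (U.card : ℝ≥0∞) = 2 ^ m - 1 := by simp [U, Finset.card_erase_of_mem]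
  calc groupMeasure m r {c | ∃ u : Fin m → ZMod 2, u ≠ 0 ∧ ∀ j, B c u (Pi.single j 1) = 0}
      ≤ groupMeasure m r (⋃ u ∈ U, {c | ∀ j, B c u (Pi.single j 1) = 0}) :=
        measure_mono fun _c ⟨u, hu, hc⟩ ↦
          Set.mem_biUnion (Finset.mem_erase.mpr ⟨hu, Finset.mem_univ u⟩) hc
    _ ≤ ∑ u ∈ U, groupMeasure m r {c | ∀ j, B c u (Pi.single j 1) = 0} :=
        measure_biUnion_finset_le _ _
    _ ≤ ∑ _u ∈ U, ((2 : ℝ≥0∞) ^ ((m - 1) * r))⁻¹ :=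
        Finset.sum_le_sum fun _u hu =>
          groupMeasure_forall_B_single_eq_zero_le (Finset.ne_of_mem_erase hu)
    _ = _ := by rw [Finset.sum_const, nsmul_eq_mul, hU]

/-- The probability that there is a nonzero `u ∈ (ZMod 2)^m` with
`B_c(u, e_j) = ∑_{i ≠ j} u_i c_{{i,j}} = 0` for every `j` (i.e. that some nontrivial
product `∏_{s∈S} x_s` is central in the random group) is at most
`(2^m − 1) · 2^(−(m−1)r)`. -/
theorem prob_extra_central_element (m r : ℕ) (hm : 2 ≤ m) (hr : 1 ≤ r) :
    groupMeasure m r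
        {c | ∃ u : Fin m → ZMod 2, u ≠ 0 ∧
          ∀ j : Fin m, B c u (Pi.single j 1) = 0}
      ≤ ((2 : ENNReal) ^ m - 1) * ((2 : ENNReal) ^ ((m - 1) * r))⁻¹ :=
  prob_extra_central_element_general m r
end
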